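/- Let u₁ ∈ C³[0,1] be complex-valued with u₁(0) = u₁'(0) = u₁''(0) = 0 and let u₂ ∈ C³[0,1] be complex-valued with u₂(0) = 0. Define v₁(ρ) := −ρu₁'(ρ) + u₁(ρ) + ρu₂'(ρ) − u₂(ρ) and v₂(ρ) := u₁'(ρ)/ρ − ρu₂'(ρ). Then Re[ ∫₀¹ v₁'(ρ) conj(u₁'(ρ)) ρ^{-2} dρ + ∫₀¹ v₂'(ρ) conj(u₂'(ρ)) dρ ] ≤ −(1/2) [ ∫₀¹ |u₁'(ρ)|² ρ^{-2} dρ + ∫₀¹ |u₂'(ρ)|² dρ ]. -/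

import Mathlib

/-!
Write `f = u₁'` and `g = u₂'`. Then `v₁' = ρ (g' - f')`, and the real part of the left-hand
integrand plus half the right-hand integrand is the derivative of
`F ρ = (Re (f ρ * conj (g ρ)) - ‖f ρ‖² / 2) / ρ - ρ ‖g ρ‖² / 2`:
the cross terms `f * conj g'` and `g' * conj f` (and likewise `f' * conj f`, `g' * conj g`)
come in conjugate pairs with cancelling real parts. So the difference of the two sides is
`F 1 - F 0⁺`, where `F 1 = -‖f 1 - g 1‖² / 2 ≤ 0`. The conditions `u₁'(0) = u₁''(0) = 0` give
`f = O(ρ²)` and `f' = O(ρ)`, hence `F = O(ρ)`, so `F 0⁺ = 0`; the same bounds make every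
integrand bounded on `(0, 1)`, so all integrals are genuine.
-/

open MeasureTheory

/-- One-sided derivative on `[0,1]`. -/
noncomputable def dI (f : ℝ → ℂ) (ρ : ℝ) : ℂ := derivWithin f (Set.Icc 0 1) ρ

open Set Complex ComplexConjugate

lemma integrableOn_Ioo_of_continuousOn_of_norm_le {E : Type*} [NormedAddCommGroup E]
    {h : ℝ → E} {a b C : ℝ} (hc : ContinuousOn h (Ioo a b)) (hb : ∀ x ∈ Ioo a b, ‖h x‖ ≤ C) :
    IntegrableOn h (Ioo a b) :=
  .of_bound measure_Ioo_lt_top (hc.aestronglyMeasurable measurableSet_Ioo) C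
    ((ae_restrict_iff' measurableSet_Ioo).2 (.of_forall hb))

noncomputable def dissipationPotential (f g : ℝ → ℂ) (ρ : ℝ) : ℝ :=
  ((f ρ * conj (g ρ)).re - ‖f ρ‖ ^ 2 / 2) / ρ - ρ * ‖g ρ‖ ^ 2 / 2

section Potential

variable {f g : ℝ → ℂ} {f' g' : ℂ} {ρ M : ℝ}

/-- This is the junk value of `x / 0`; `continuousOn_dissipationPotential` shows that it is also
the limit at `0`. -/
lemma dissipationPotential_zero : dissipationPotential f g 0 = 0 := by
  simp [dissipationPotential]

lemma dissipationPotential_one : dissipationPotential f g 1 = -‖f 1 - g 1‖ ^ 2 / 2 := by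
  simp only [dissipationPotential, div_one, one_mul, Complex.sq_norm, normSq_sub]
  ring

lemma hasDerivAt_dissipationPotential (hf : HasDerivAt f f' ρ) (hg : HasDerivAt g g' ρ)
    (hρ : ρ ≠ 0) :
    HasDerivAt (dissipationPotential f g)
      ((ρ * (g' - f') * conj (f ρ) / ρ ^ 2
        + ((f' * ρ - f ρ) / ρ ^ 2 - (g ρ + ρ * g')) * conj (g ρ)).re
        + (‖f ρ‖ ^ 2 / ρ ^ 2 + ‖g ρ‖ ^ 2) / 2) ρ := by
  have hx : HasDerivAt (fun x : ℝ => (x : ℂ)) 1 ρ := (hasDerivAt_id ρ).ofReal_comp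
  have hΦ := (((hf.mul hg.star).sub ((hf.mul hf.star).div_const 2)).div hx
    (ofReal_ne_zero.2 hρ)).sub ((hx.mul (hg.mul hg.star)).div_const 2)
  refine ((reCLM.hasFDerivAt.comp_hasDerivAt ρ hΦ).congr_of_eventuallyEq
    (.of_forall fun x => ?_)).congr_deriv ?_
  · simp [dissipationPotential, mul_conj', ← ofReal_pow]
  · simp only [reCLM_apply, Pi.mul_apply, Pi.sub_apply, star_def, ← ofReal_pow, add_re, sub_re,
      mul_re, div_re, conj_re, ofReal_re, one_re, re_ofNat, add_im, sub_im, mul_im, div_im,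
      conj_im, ofReal_im, one_im, im_ofNat, Complex.sq_norm, normSq_apply]
    field_simp
    ring

lemma abs_dissipationPotential_le (hρ : ρ ∈ Icc 0 1) (hf : ‖f ρ‖ ≤ M * ρ ^ 2) (hg : ‖g ρ‖ ≤ M) :
    |dissipationPotential f g ρ| ≤ 2 * M ^ 2 * ρ := by
  rcases hρ.1.eq_or_lt with rfl | hρ0
  · simp [dissipationPotential_zero]
  have hM : 0 ≤ M := (norm_nonneg _).trans hg
  have hfg : |(f ρ * conj (g ρ)).re| ≤ M ^ 2 * ρ ^ 2 := by
    refine (abs_re_le_norm _).trans ?_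
    rw [norm_mul, Complex.norm_conj]
    nlinarith [mul_le_mul hf hg (norm_nonneg _) (by positivity)]
  have hff : ‖f ρ‖ ^ 2 ≤ M ^ 2 * ρ ^ 2 := by
    have : ‖f ρ‖ ≤ M * ρ := hf.trans (mul_le_mul_of_nonneg_left (by nlinarith [hρ.2]) hM)
    simpa [mul_pow] using pow_le_pow_left₀ (norm_nonneg _) this 2
  have hnum : |(f ρ * conj (g ρ)).re - ‖f ρ‖ ^ 2 / 2| ≤ 3 / 2 * M ^ 2 * ρ ^ 2 := by
    rw [abs_le] at hfg ⊢
    constructor <;> nlinarith [sq_nonneg ‖f ρ‖]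
  have hlast : |ρ * ‖g ρ‖ ^ 2 / 2| ≤ M ^ 2 * ρ / 2 := by
    rw [abs_of_nonneg (by positivity)]
    nlinarith [pow_le_pow_left₀ (norm_nonneg _) hg 2]
  calc |dissipationPotential f g ρ|
      ≤ |(f ρ * conj (g ρ)).re - ‖f ρ‖ ^ 2 / 2| / ρ + |ρ * ‖g ρ‖ ^ 2 / 2| := by
        rw [dissipationPotential]
        refine (abs_sub _ _).trans ?_
        rw [abs_div, abs_of_pos hρ0]
    _ ≤ 3 / 2 * M ^ 2 * ρ ^ 2 / ρ + M ^ 2 * ρ / 2 := by gcongr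
    _ = 2 * M ^ 2 * ρ := by field_simp; ring

lemma continuousOn_dissipationPotential (hfc : ContinuousOn f (Icc 0 1))
    (hgc : ContinuousOn g (Icc 0 1)) (hf : ∀ ρ ∈ Icc (0 : ℝ) 1, ‖f ρ‖ ≤ M * ρ ^ 2)
    (hg : ∀ ρ ∈ Icc (0 : ℝ) 1, ‖g ρ‖ ≤ M) :
    ContinuousOn (dissipationPotential f g) (Icc 0 1) := by
  intro x hx
  rcases hx.1.eq_or_lt with rfl | hx0
  · have hlim : Filter.Tendsto (fun ρ => 2 * M ^ 2 * ρ) (nhdsWithin 0 (Icc 0 1)) (nhds 0) :=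
      tendsto_nhdsWithin_of_tendsto_nhds ((continuous_const_mul _).tendsto' 0 0 (mul_zero _))
    rw [ContinuousWithinAt, dissipationPotential_zero]
    exact squeeze_zero_norm' (eventually_mem_nhdsWithin.mono fun ρ hρ =>
      abs_dissipationPotential_le hρ (hf ρ hρ) (hg ρ hρ)) hlim
  · have hfx := hfc x hx
    have hgx := hgc x hx
    have hre : ContinuousWithinAt (fun ρ => (f ρ * conj (g ρ)).re) (Icc 0 1) x :=
      continuous_re.continuousAt.comp_continuousWithinAt
        (hfx.mul (continuous_conj.continuousAt.comp_continuousWithinAt hgx))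
    exact ((hre.sub ((hfx.norm.pow 2).div_const 2)).div continuousWithinAt_id hx0.ne').sub
      ((continuousWithinAt_id.mul (hgx.norm.pow 2)).div_const 2)

end Potential

section Integrability

variable {f g f' g' : ℝ → ℂ} {M : ℝ}

lemma ofReal_sq_ne_zero_on_Ioo : ∀ y ∈ Ioo (0 : ℝ) 1, (y : ℂ) ^ 2 ≠ 0 :=
  fun y hy => by simp [hy.1.ne']

lemma integrableOn_pairing_integrand_fst (hfc : ContinuousOn f (Icc 0 1))
    (hf'c : ContinuousOn f' (Icc 0 1)) (hg'c : ContinuousOn g' (Icc 0 1))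
    (hf : ∀ ρ ∈ Icc (0 : ℝ) 1, ‖f ρ‖ ≤ M * ρ ^ 2) (hf' : ∀ ρ ∈ Icc (0 : ℝ) 1, ‖f' ρ‖ ≤ M * ρ)
    (hg' : ∀ ρ ∈ Icc (0 : ℝ) 1, ‖g' ρ‖ ≤ M) :
    IntegrableOn (fun ρ : ℝ => ρ * (g' ρ - f' ρ) * conj (f ρ) / ρ ^ 2) (Ioo 0 1) := by
  have := hfc.mono Ioo_subset_Icc_self
  have := hf'c.mono Ioo_subset_Icc_self
  have := hg'c.mono Ioo_subset_Icc_self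
  have := continuous_ofReal
  have := continuous_conj
  have := ofReal_sq_ne_zero_on_Ioo
  refine integrableOn_Ioo_of_continuousOn_of_norm_le (C := 2 * M ^ 2)
    (by fun_prop (disch := assumption)) fun ρ hρ => ?_
  have hρ' := Ioo_subset_Icc_self hρ
  have hM : 0 ≤ M := (norm_nonneg _).trans (hg' ρ hρ')
  have hdiff : ‖g' ρ - f' ρ‖ ≤ 2 * M :=
    (norm_sub_le _ _).trans (by nlinarith [hg' ρ hρ', hf' ρ hρ', hρ.2])
  rw [norm_div, norm_mul, norm_mul, Complex.norm_conj, norm_pow, norm_real,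
    Real.norm_of_nonneg hρ.1.le, div_le_iff₀ (by nlinarith [hρ.1])]
  calc ρ * ‖g' ρ - f' ρ‖ * ‖f ρ‖ ≤ ρ * (2 * M) * (M * ρ ^ 2) :=
        mul_le_mul (mul_le_mul_of_nonneg_left hdiff hρ.1.le) (hf ρ hρ') (norm_nonneg _)
          (by nlinarith [hρ.1])
    _ ≤ 2 * M ^ 2 * ρ ^ 2 := by
        nlinarith [mul_nonneg (mul_nonneg (sq_nonneg M) (sq_nonneg ρ)) (sub_nonneg.2 hρ.2.le)]

lemma integrableOn_pairing_integrand_snd (hfc : ContinuousOn f (Icc 0 1))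
    (hf'c : ContinuousOn f' (Icc 0 1)) (hgc : ContinuousOn g (Icc 0 1))
    (hg'c : ContinuousOn g' (Icc 0 1))
    (hf : ∀ ρ ∈ Icc (0 : ℝ) 1, ‖f ρ‖ ≤ M * ρ ^ 2) (hf' : ∀ ρ ∈ Icc (0 : ℝ) 1, ‖f' ρ‖ ≤ M * ρ)
    (hg : ∀ ρ ∈ Icc (0 : ℝ) 1, ‖g ρ‖ ≤ M) (hg' : ∀ ρ ∈ Icc (0 : ℝ) 1, ‖g' ρ‖ ≤ M) :
    IntegrableOn (fun ρ : ℝ => ((f' ρ * ρ - f ρ) / ρ ^ 2 - (g ρ + ρ * g' ρ)) * conj (g ρ))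
      (Ioo 0 1) := by
  have := hfc.mono Ioo_subset_Icc_self
  have := hf'c.mono Ioo_subset_Icc_self
  have := hgc.mono Ioo_subset_Icc_self
  have := hg'c.mono Ioo_subset_Icc_self
  have := continuous_ofReal
  have := continuous_conj
  have := ofReal_sq_ne_zero_on_Ioo
  refine integrableOn_Ioo_of_continuousOn_of_norm_le (C := 4 * M * M)
    (by fun_prop (disch := assumption)) fun ρ hρ => ?_
  have hρ' := Ioo_subset_Icc_self hρ
  have hM : 0 ≤ M := (norm_nonneg _).trans (hg ρ hρ')
  have hnρ : ‖(ρ : ℂ)‖ = ρ := by rw [norm_real, Real.norm_of_nonneg hρ.1.le]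
  have hquot : ‖(f' ρ * ρ - f ρ) / ρ ^ 2‖ ≤ 2 * M := by
    rw [norm_div, norm_pow, hnρ, div_le_iff₀ (by nlinarith [hρ.1])]
    refine (norm_sub_le _ _).trans ?_
    rw [norm_mul, hnρ]
    nlinarith [hf ρ hρ', mul_le_mul_of_nonneg_right (hf' ρ hρ') hρ.1.le]
  have hsum : ‖g ρ + ρ * g' ρ‖ ≤ 2 * M := by
    refine (norm_add_le _ _).trans ?_
    rw [norm_mul, hnρ]
    nlinarith [hg ρ hρ', hg' ρ hρ', hρ.2, norm_nonneg (g' ρ)]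
  rw [norm_mul, Complex.norm_conj]
  exact mul_le_mul ((norm_sub_le _ _).trans (by linarith)) (hg ρ hρ') (norm_nonneg _)
    (by positivity)

lemma integrableOn_Ioo_norm_sq_div_sq (hfc : ContinuousOn f (Icc 0 1))
    (hf : ∀ ρ ∈ Icc (0 : ℝ) 1, ‖f ρ‖ ≤ M * ρ ^ 2) :
    IntegrableOn (fun ρ => ‖f ρ‖ ^ 2 / ρ ^ 2) (Ioo 0 1) := by
  have := hfc.mono Ioo_subset_Icc_self
  have : ∀ y ∈ Ioo (0 : ℝ) 1, y ^ 2 ≠ 0 := fun y hy => pow_ne_zero 2 hy.1.ne'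
  refine integrableOn_Ioo_of_continuousOn_of_norm_le (C := M ^ 2)
    (by fun_prop (disch := assumption)) fun ρ hρ => ?_
  rw [Real.norm_of_nonneg (by positivity), div_le_iff₀ (by nlinarith [hρ.1])]
  calc ‖f ρ‖ ^ 2 ≤ (M * ρ ^ 2) ^ 2 :=
        pow_le_pow_left₀ (norm_nonneg _) (hf ρ (Ioo_subset_Icc_self hρ)) 2
    _ ≤ M ^ 2 * ρ ^ 2 := by
        nlinarith [mul_nonneg (mul_nonneg (sq_nonneg M) (sq_nonneg ρ)) (sub_nonneg.2 hρ.2.le),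
          hρ.1]

theorem re_integral_add_integral_le_neg_half (hfc : ContinuousOn f (Icc 0 1))
    (hf'c : ContinuousOn f' (Icc 0 1)) (hgc : ContinuousOn g (Icc 0 1))
    (hg'c : ContinuousOn g' (Icc 0 1))
    (hfd : ∀ ρ ∈ Ioo (0 : ℝ) 1, HasDerivAt f (f' ρ) ρ)
    (hgd : ∀ ρ ∈ Ioo (0 : ℝ) 1, HasDerivAt g (g' ρ) ρ)
    (hf : ∀ ρ ∈ Icc (0 : ℝ) 1, ‖f ρ‖ ≤ M * ρ ^ 2) (hf' : ∀ ρ ∈ Icc (0 : ℝ) 1, ‖f' ρ‖ ≤ M * ρ)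
    (hg : ∀ ρ ∈ Icc (0 : ℝ) 1, ‖g ρ‖ ≤ M) (hg' : ∀ ρ ∈ Icc (0 : ℝ) 1, ‖g' ρ‖ ≤ M) :
    ((∫ ρ in Ioo (0 : ℝ) 1, ρ * (g' ρ - f' ρ) * conj (f ρ) / (ρ : ℂ) ^ 2)
      + ∫ ρ in Ioo (0 : ℝ) 1, ((f' ρ * ρ - f ρ) / (ρ : ℂ) ^ 2 - (g ρ + ρ * g' ρ)) * conj (g ρ)).re
    ≤ -(1 / 2) * ((∫ ρ in Ioo (0 : ℝ) 1, ‖f ρ‖ ^ 2 / ρ ^ 2) + ∫ ρ in Ioo (0 : ℝ) 1, ‖g ρ‖ ^ 2) := by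
  have iA := integrableOn_pairing_integrand_fst hfc hf'c hg'c hf hf' hg'
  have iB := integrableOn_pairing_integrand_snd hfc hf'c hgc hg'c hf hf' hg hg'
  have iC := integrableOn_Ioo_norm_sq_div_sq hfc hf
  have iD : IntegrableOn (fun ρ => ‖g ρ‖ ^ 2) (Ioo 0 1) :=
    (hgc.norm.pow 2).integrableOn_Icc.mono_set Ioo_subset_Icc_self
  have hFTC := intervalIntegral.integral_eq_sub_of_hasDerivAt_of_le zero_le_one
    (continuousOn_dissipationPotential hfc hgc hf hg)
    (fun ρ hρ => hasDerivAt_dissipationPotential (hfd ρ hρ) (hgd ρ hρ) hρ.1.ne')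
    ((intervalIntegrable_iff_integrableOn_Ioo_of_le zero_le_one).2
      ((iA.add iB).re.add ((iC.add iD).div_const 2)))
  have hre := integral_re (iA.add iB)
  simp only [Pi.add_apply, RCLike.re_to_complex] at hre
  rw [intervalIntegral.integral_of_le zero_le_one, integral_Ioc_eq_integral_Ioo,
    integral_add (by exact (iA.add iB).re) (by exact (iC.add iD).div_const 2), hre,
    integral_add iA iB, integral_div, integral_add iC iD, dissipationPotential_one,
    dissipationPotential_zero] at hFTC
  nlinarith [sq_nonneg ‖f 1 - g 1‖]

end Integrability

section OneSidedDerivative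

variable {h : ℝ → ℂ} {ρ : ℝ}

lemma contDiffOn_dI {m n : WithTop ℕ∞} (hh : ContDiffOn ℝ n h (Icc 0 1)) (hmn : m + 1 ≤ n) :
    ContDiffOn ℝ m (dI h) (Icc 0 1) :=
  hh.derivWithin (uniqueDiffOn_Icc one_pos) hmn

lemma hasDerivAt_dI (hh : DifferentiableOn ℝ h (Icc 0 1)) (hρ : ρ ∈ Ioo 0 1) :
    HasDerivAt h (dI h ρ) ρ := by
  have hmem := Icc_mem_nhds hρ.1 hρ.2
  rw [dI, derivWithin_of_mem_nhds hmem]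
  exact ((hh ρ (Ioo_subset_Icc_self hρ)).differentiableAt hmem).hasDerivAt

lemma dI_eq_of_hasDerivAt {h' : ℂ} (hρ : ρ ∈ Ioo 0 1) (hh : HasDerivAt h h' ρ) :
    dI h ρ = h' := by
  rw [dI, derivWithin_of_mem_nhds (Icc_mem_nhds hρ.1 hρ.2), hh.deriv]

lemma norm_le_mul_pow_succ_of_norm_dI_le {C : ℝ} {n : ℕ} (hh : DifferentiableOn ℝ h (Icc 0 1))
    (h0 : h 0 = 0) (hC : 0 ≤ C) (hb : ∀ x ∈ Icc (0 : ℝ) 1, ‖dI h x‖ ≤ C * x ^ n)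
    (hρ : ρ ∈ Icc (0 : ℝ) 1) : ‖h ρ‖ ≤ C * ρ ^ (n + 1) := by
  have hsub : Icc 0 ρ ⊆ Icc (0 : ℝ) 1 := Icc_subset_Icc_right hρ.2
  have := (convex_Icc 0 ρ).norm_image_sub_le_of_norm_hasDerivWithin_le
    (fun x hx => (hh x (hsub hx)).hasDerivWithinAt.mono hsub)
    (fun x hx => (hb x (hsub hx)).trans
      (mul_le_mul_of_nonneg_left (pow_le_pow_left₀ hx.1 hx.2 n) hC))
    (left_mem_Icc.2 hρ.1) (right_mem_Icc.2 hρ.1)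
  rwa [h0, sub_zero, sub_zero, Real.norm_of_nonneg hρ.1, mul_assoc, ← pow_succ] at this

end OneSidedDerivative

section FreeOperator

variable {u₁ u₂ w₁ w₂ : ℝ → ℂ} {a b : ℂ} {ρ : ℝ}

lemma hasDerivAt_freeOperator_fst (hu₁ : HasDerivAt u₁ (w₁ ρ) ρ) (hw₁ : HasDerivAt w₁ a ρ)
    (hu₂ : HasDerivAt u₂ (w₂ ρ) ρ) (hw₂ : HasDerivAt w₂ b ρ) :
    HasDerivAt (fun x : ℝ => -(x : ℂ) * w₁ x + u₁ x + x * w₂ x - u₂ x) (ρ * (b - a)) ρ := by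
  have hx : HasDerivAt (fun x : ℝ => (x : ℂ)) 1 ρ := (hasDerivAt_id ρ).ofReal_comp
  refine ((((hx.neg.mul hw₁).add hu₁).add (hx.mul hw₂)).sub hu₂).congr_deriv ?_
  rw [Pi.neg_apply]
  ring

lemma hasDerivAt_freeOperator_snd (hw₁ : HasDerivAt w₁ a ρ) (hw₂ : HasDerivAt w₂ b ρ)
    (hρ : ρ ≠ 0) :
    HasDerivAt (fun x : ℝ => w₁ x / x - x * w₂ x)
      ((a * ρ - w₁ ρ) / ρ ^ 2 - (w₂ ρ + ρ * b)) ρ := by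
  have hx : HasDerivAt (fun x : ℝ => (x : ℂ)) 1 ρ := (hasDerivAt_id ρ).ofReal_comp
  refine ((hw₁.div hx (ofReal_ne_zero.2 hρ)).sub (hx.mul hw₂)).congr_deriv ?_
  ring

lemma exists_norm_dI_le {u₁ u₂ : ℝ → ℂ} (h1 : ContDiffOn ℝ 3 u₁ (Icc 0 1))
    (h11 : dI u₁ 0 = 0) (h12 : dI (dI u₁) 0 = 0) (h2 : ContDiffOn ℝ 2 u₂ (Icc 0 1)) :
    ∃ M, (∀ ρ ∈ Icc (0 : ℝ) 1, ‖dI u₁ ρ‖ ≤ M * ρ ^ 2)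
      ∧ (∀ ρ ∈ Icc (0 : ℝ) 1, ‖dI (dI u₁) ρ‖ ≤ M * ρ)
      ∧ (∀ ρ ∈ Icc (0 : ℝ) 1, ‖dI u₂ ρ‖ ≤ M)
      ∧ (∀ ρ ∈ Icc (0 : ℝ) 1, ‖dI (dI u₂) ρ‖ ≤ M) := by
  have hf := contDiffOn_dI h1 (m := 2) (by norm_num)
  have hf' := contDiffOn_dI hf (m := 1) (by norm_num)
  have hf'' := contDiffOn_dI hf' (m := 0) (by norm_num)
  have hg := contDiffOn_dI h2 (m := 1) (by norm_num)
  have hg' := contDiffOn_dI hg (m := 0) (by norm_num)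
  obtain ⟨M, hM⟩ := isCompact_Icc.exists_bound_of_continuousOn
    ((hf''.continuousOn.norm.add hg.continuousOn.norm).add hg'.continuousOn.norm)
  have hM' : ∀ ρ ∈ Icc (0 : ℝ) 1,
      ‖dI (dI (dI u₁)) ρ‖ ≤ M ∧ ‖dI u₂ ρ‖ ≤ M ∧ ‖dI (dI u₂) ρ‖ ≤ M := by
    intro ρ hρ
    have := (le_abs_self _).trans (hM ρ hρ)
    simp only [Pi.add_apply] at this
    refine ⟨?_, ?_, ?_⟩ <;> linarith [norm_nonneg (dI (dI (dI u₁)) ρ), norm_nonneg (dI u₂ ρ),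
      norm_nonneg (dI (dI u₂) ρ)]
  have hM0 : 0 ≤ M := (norm_nonneg _).trans (hM' 0 (left_mem_Icc.2 zero_le_one)).2.1
  have hf'b : ∀ ρ ∈ Icc (0 : ℝ) 1, ‖dI (dI u₁) ρ‖ ≤ M * ρ := fun ρ hρ => by
    simpa using norm_le_mul_pow_succ_of_norm_dI_le (n := 0) (hf'.differentiableOn one_ne_zero)
      h12 hM0 (fun x hx => by simpa using (hM' x hx).1) hρ
  refine ⟨M, fun ρ hρ => ?_, hf'b, fun ρ hρ => (hM' ρ hρ).2.1, fun ρ hρ => (hM' ρ hρ).2.2⟩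
  exact norm_le_mul_pow_succ_of_norm_dI_le (n := 1) (hf.differentiableOn two_ne_zero) h11 hM0
    (fun x hx => by simpa using hf'b x hx) hρ

end FreeOperator

theorem stmt_9 (u₁ u₂ : ℝ → ℂ)
    (h1 : ContDiffOn ℝ 3 u₁ (Set.Icc 0 1))
    (h11 : dI u₁ 0 = 0) (h12 : dI (dI u₁) 0 = 0)
    (h2 : ContDiffOn ℝ 3 u₂ (Set.Icc 0 1)) :
    ((∫ ρ in Set.Ioo (0:ℝ) 1,
        dI (fun x : ℝ => -(x:ℂ) * dI u₁ x + u₁ x + (x:ℂ) * dI u₂ x - u₂ x) ρ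
          * (starRingEnd ℂ) (dI u₁ ρ) / (ρ:ℂ) ^ 2)
      + ∫ ρ in Set.Ioo (0:ℝ) 1,
        dI (fun x : ℝ => dI u₁ x / (x:ℂ) - (x:ℂ) * dI u₂ x) ρ
          * (starRingEnd ℂ) (dI u₂ ρ)).re
    ≤ -(1/2) * ((∫ ρ in Set.Ioo (0:ℝ) 1, ‖dI u₁ ρ‖ ^ 2 / ρ ^ 2)
      + ∫ ρ in Set.Ioo (0:ℝ) 1, ‖dI u₂ ρ‖ ^ 2) := by
  have hf := contDiffOn_dI h1 (m := 2) (by norm_num)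
  have hg := contDiffOn_dI h2 (m := 2) (by norm_num)
  have hf' := contDiffOn_dI hf (m := 1) (by norm_num)
  have hg' := contDiffOn_dI hg (m := 1) (by norm_num)
  have hu₁ := fun ρ (hρ : ρ ∈ Ioo (0 : ℝ) 1) => hasDerivAt_dI (h1.differentiableOn (by norm_num)) hρ
  have hu₂ := fun ρ (hρ : ρ ∈ Ioo (0 : ℝ) 1) => hasDerivAt_dI (h2.differentiableOn (by norm_num)) hρ
  have hw₁ := fun ρ (hρ : ρ ∈ Ioo (0 : ℝ) 1) => hasDerivAt_dI (hf.differentiableOn (by norm_num)) hρ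
  have hw₂ := fun ρ (hρ : ρ ∈ Ioo (0 : ℝ) 1) => hasDerivAt_dI (hg.differentiableOn (by norm_num)) hρ
  obtain ⟨M, hfb, hf'b, hgb, hg'b⟩ := exists_norm_dI_le h1 h11 h12 (h2.of_le (by norm_num))
  refine (le_of_eq ?_).trans (re_integral_add_integral_le_neg_half hf.continuousOn
    hf'.continuousOn hg.continuousOn hg'.continuousOn hw₁ hw₂ hfb hf'b hgb hg'b)
  congr 2 <;> refine setIntegral_congr_fun measurableSet_Ioo fun ρ hρ => ?_
  · rw [dI_eq_of_hasDerivAt hρ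
      (hasDerivAt_freeOperator_fst (hu₁ ρ hρ) (hw₁ ρ hρ) (hu₂ ρ hρ) (hw₂ ρ hρ))]
  · rw [dI_eq_of_hasDerivAt hρ (hasDerivAt_freeOperator_snd (hw₁ ρ hρ) (hw₂ ρ hρ) hρ.1.ne')]
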